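/- arXiv:2402.15944 — 3 statements merged into one kernel-verified Lean document; each statement's English description precedes it below -/
import Mathlib

section
/- Suppose spark(Q) > 2κ, x = Qs⋆ with ‖s⋆‖₀ ≤ κ, and let s₀ = V₁V₁ᵀ s⋆ with V₁ from the SVD of Q. Let I_k be an index set of size k ≤ 2κ and ŝ_k a vector supported on I_k such that s₀ + W z̃ − V₁V₁ᵀ ŝ_k = 0 for some z̃ ∈ ℝ^{L−N}. If supp(s⋆) ⊆ I_k, then z̃ = 0 and ŝ_k = s⋆. -/
open Matrix BigOperators

/-- if the residual in the high-dimensional system vanishes, the detected index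
set contains the support of `s⋆`, and `|I_k| = k ≤ 2κ`, then `zt = 0` and `shat_k = s⋆`. -/
theorem zero_residual_recovery {N L κ k : ℕ}
    (U : Matrix (Fin N) (Fin N) ℝ) (hU : U * Uᵀ = 1 ∧ Uᵀ * U = 1)
    (V₁ : Matrix (Fin L) (Fin N) ℝ) (W : Matrix (Fin L) (Fin (L - N)) ℝ)
    (hV₁ : V₁ᵀ * V₁ = 1) (hWW : Wᵀ * W = 1) (hVW : Wᵀ * V₁ = 0)
    (d : Fin N → ℝ) (hd : ∀ i, 0 < d i)
    (Q : Matrix (Fin N) (Fin L) ℝ) (hQ : Q = U * Matrix.diagonal d * V₁ᵀ)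
    (hker : ∀ v : Fin L → ℝ, Q.mulVec v = 0 → ∃ z, v = W.mulVec z)
    (hspark : ∀ v : Fin L → ℝ, v ≠ 0 → Q.mulVec v = 0 →
      2 * κ < (Finset.univ.filter fun i => v i ≠ 0).card)
    (sstar : Fin L → ℝ) (hsp : (Finset.univ.filter fun i => sstar i ≠ 0).card ≤ κ)
    (x : Fin N → ℝ) (hx : x = Q.mulVec sstar)
    (Ik : Finset (Fin L)) (hk : Ik.card = k) (hk2 : k ≤ 2 * κ)
    (shat : Fin L → ℝ) (hshat : ∀ l, l ∉ Ik → shat l = 0)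
    (zt : Fin (L - N) → ℝ)
    (hres : (V₁ * V₁ᵀ).mulVec sstar + W.mulVec zt - (V₁ * V₁ᵀ).mulVec shat = 0)
    (hsupp : ∀ l, sstar l ≠ 0 → l ∈ Ik) :
    zt = 0 ∧ shat = sstar := by
  -- v := sstar - shat
  have key : W.mulVec zt = (V₁ * V₁ᵀ).mulVec shat - (V₁ * V₁ᵀ).mulVec sstar := by
    have := hres
    funext i
    have h := congrFun hres i
    simp [Pi.add_apply, Pi.sub_apply, Pi.zero_apply] at h ⊢
    linarith
  have hzt : zt = 0 := by
    have h1 : Wᵀ.mulVec (W.mulVec zt) = zt := by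
      rw [Matrix.mulVec_mulVec, hWW, Matrix.one_mulVec]
    have h2 : Wᵀ.mulVec (W.mulVec zt) = 0 := by
      rw [key, Matrix.mulVec_sub, Matrix.mulVec_mulVec, Matrix.mulVec_mulVec,
        ← Matrix.mul_assoc, hVW]
      simp
    rw [h1] at h2; exact h2
  subst hzt
  have hres' : (V₁ * V₁ᵀ).mulVec (sstar - shat) = 0 := by
    rw [Matrix.mulVec_sub]
    funext i
    have h := congrFun hres i
    simp [Pi.add_apply, Pi.sub_apply, Pi.zero_apply] at h ⊢
    linarith
  have hV : V₁ᵀ.mulVec (sstar - shat) = 0 := by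
    have : V₁ᵀ.mulVec ((V₁ * V₁ᵀ).mulVec (sstar - shat)) = V₁ᵀ.mulVec (sstar - shat) := by
      rw [Matrix.mulVec_mulVec, ← Matrix.mul_assoc, hV₁, Matrix.one_mul]
    rw [hres'] at this
    rw [← this]; simp
  have hQ0 : Q.mulVec (sstar - shat) = 0 := by
    rw [hQ, ← Matrix.mulVec_mulVec, ← Matrix.mulVec_mulVec, hV]
    simp
  have hveq : sstar - shat = 0 := by
    by_contra hne
    have hcard := hspark _ hne hQ0
    have hsub : (Finset.univ.filter fun i => (sstar - shat) i ≠ 0) ⊆ Ik := by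
      intro l hl
      simp only [Finset.mem_filter, Pi.sub_apply] at hl
      by_contra hnotin
      have h1 := hshat l hnotin
      have h2 : sstar l = 0 := by
        by_contra h; exact hnotin (hsupp l h)
      exact hl.2 (by rw [h1, h2, sub_zero])
    have := Finset.card_le_card hsub
    omega
  refine ⟨rfl, ?_⟩
  funext l
  have := congrFun hveq l
  simp [Pi.sub_apply, Pi.zero_apply] at this
  linarith
end

section
/- Let v, v₀ ∈ ℝ^K with v(k) > 0 for all k, and suppose the quotients z_k = −v₀(k)/v(k) are ordered: z_k ≤ z_{k+1}. Define α₁ = Σ_{i=1}^K v(i) and α_k = α₁ − 2 Σ_{i=1}^{k−1} v(i) for k > 1. If k⋆ is an index with α_{k⋆} ≥ 0 and α_{k⋆+1} ≤ 0, then z_{k⋆} is a minimizer of f(z) = ‖v₀ + z v‖₁ over z ∈ ℝ. -/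
open BigOperators

lemma l1_aux {K : ℕ} (v v₀ : Fin K → ℝ) (zs z : ℝ) (s : Fin K → ℝ)
    (h1 : ∀ k, s k * (v₀ k + zs * v k) = |v₀ k + zs * v k|)
    (h2 : ∀ k, s k * (v₀ k + z * v k) ≤ |v₀ k + z * v k|)
    (h3 : (zs - z) * ∑ k, s k * v k ≤ 0) :
    (∑ k, |v₀ k + zs * v k|) ≤ ∑ k, |v₀ k + z * v k| := by
  have key : ∑ k, s k * (v₀ k + zs * v k)
      = ∑ k, s k * (v₀ k + z * v k) + (zs - z) * ∑ k, s k * v k := by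
    rw [Finset.mul_sum, ← Finset.sum_add_distrib]
    apply Finset.sum_congr rfl
    intros; ring
  calc (∑ k, |v₀ k + zs * v k|) = ∑ k, s k * (v₀ k + zs * v k) := by
        exact (Finset.sum_congr rfl (fun k _ => (h1 k).symm))
    _ = ∑ k, s k * (v₀ k + z * v k) + (zs - z) * ∑ k, s k * v k := key
    _ ≤ ∑ k, |v₀ k + z * v k| + 0 :=
        add_le_add (Finset.sum_le_sum (fun k _ => h2 k)) h3
    _ = ∑ k, |v₀ k + z * v k| := by ring

/-- with ordered breakpoints `z_k = -v₀(k)/v(k)` and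
`α_k = Σᵢ v(i) - 2 Σ_{i<k} v(i)`, any index `k⋆` with `α_{k⋆} ≥ 0` and `α_{k⋆+1} ≤ 0`
yields a minimizer `z_{k⋆}` of `f(z) = ‖v₀ + z v‖₁`.
(Indices are 0-based: `α (k : Fin K)` is the 1-based `α_{k+1}`.) -/
theorem l1_line_search_minimizer {K : ℕ} (v v₀ : Fin K → ℝ) (hv : ∀ k, 0 < v k)
    (hord : ∀ j k : Fin K, j ≤ k → -(v₀ j / v j) ≤ -(v₀ k / v k))
    (kstar : Fin K)
    (hα : 0 ≤ (∑ i, v i) - 2 * ∑ i ∈ Finset.univ.filter (fun i : Fin K => i < kstar), v i)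
    (hα' : (∑ i, v i) - 2 * ∑ i ∈ Finset.univ.filter (fun i : Fin K => i ≤ kstar), v i ≤ 0) :
    ∀ z : ℝ, (∑ k, |v₀ k + (-(v₀ kstar / v kstar)) * v k|) ≤ ∑ k, |v₀ k + z * v k| := by
  intro z
  set zs := -(v₀ kstar / v kstar) with hzs
  have hpos : ∀ k : Fin K, k ≤ kstar → 0 ≤ v₀ k + zs * v k := by
    intro k hk
    rw [hzs]
    have hvk := hv k
    have hd : v₀ k / v k * v k = v₀ k := div_mul_cancel₀ _ (ne_of_gt hvk)
    have h2 : -(v₀ k / v k) * v k ≤ -(v₀ kstar / v kstar) * v k :=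
      mul_le_mul_of_nonneg_right (hord k kstar hk) hvk.le
    have h3 : -(v₀ k / v k) * v k = -v₀ k := by rw [neg_mul, hd]
    linarith
  have hneg : ∀ k : Fin K, kstar ≤ k → v₀ k + zs * v k ≤ 0 := by
    intro k hk
    rw [hzs]
    have hvk := hv k
    have hd : v₀ k / v k * v k = v₀ k := div_mul_cancel₀ _ (ne_of_gt hvk)
    have h2 : -(v₀ kstar / v kstar) * v k ≤ -(v₀ k / v k) * v k :=
      mul_le_mul_of_nonneg_right (hord kstar k hk) hvk.le
    have h3 : -(v₀ k / v k) * v k = -v₀ k := by rw [neg_mul, hd]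
    linarith
  rcases le_total zs z with hz | hz
  · -- use s k = 1 for k ≤ kstar, -1 otherwise
    apply l1_aux v v₀ zs z (fun k => if k ≤ kstar then 1 else -1)
    · intro k
      by_cases h : k ≤ kstar
      · simp only [h, if_true, one_mul]
        exact (abs_of_nonneg (hpos k h)).symm
      · simp only [h, if_false]
        have := hneg k (le_of_lt (lt_of_not_ge h))
        rw [abs_of_nonpos this]; ring
    · intro k
      by_cases h : k ≤ kstar
      · simp only [h, if_true, one_mul]; exact le_abs_self _
      · simp only [h, if_false]
        linarith [neg_abs_le (v₀ k + z * v k)]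
    · have hsum : ∑ k, (if k ≤ kstar then (1:ℝ) else -1) * v k
          = 2 * ∑ i ∈ Finset.univ.filter (fun i : Fin K => i ≤ kstar), v i - ∑ i, v i := by
        rw [Finset.sum_filter, Finset.mul_sum, ← Finset.sum_sub_distrib]
        apply Finset.sum_congr rfl
        intro k _
        by_cases h : k ≤ kstar <;> simp [h] <;> ring
      rw [hsum]
      have h1 : 0 ≤ 2 * ∑ i ∈ Finset.univ.filter (fun i : Fin K => i ≤ kstar), v i - ∑ i, v i := by
        linarith
      nlinarith
  · -- use s k = 1 for k < kstar, -1 otherwise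
    apply l1_aux v v₀ zs z (fun k => if k < kstar then 1 else -1)
    · intro k
      by_cases h : k < kstar
      · simp only [h, if_true, one_mul]
        exact (abs_of_nonneg (hpos k (le_of_lt h))).symm
      · simp only [h, if_false]
        have := hneg k (le_of_not_gt h)
        rw [abs_of_nonpos this]; ring
    · intro k
      by_cases h : k < kstar
      · simp only [h, if_true, one_mul]; exact le_abs_self _
      · simp only [h, if_false]
        linarith [neg_abs_le (v₀ k + z * v k)]
    · have hsum : ∑ k, (if k < kstar then (1:ℝ) else -1) * v k
          = 2 * ∑ i ∈ Finset.univ.filter (fun i : Fin K => i < kstar), v i - ∑ i, v i := by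
        rw [Finset.sum_filter, Finset.mul_sum, ← Finset.sum_sub_distrib]
        apply Finset.sum_congr rfl
        intro k _
        by_cases h : k < kstar <;> simp [h] <;> ring
      rw [hsum]
      have h1 : 2 * ∑ i ∈ Finset.univ.filter (fun i : Fin K => i < kstar), v i - ∑ i, v i ≤ 0 := by
        linarith
      nlinarith
end

section
/- If Q satisfies the (κ, δ)-RIP with singular values σ₁ ≤ σ_N (all positive) and Q = UΣV₁ᵀ, then Q̄ = V₁V₁ᵀ satisfies ‖Q̄s‖₂ = ‖V₁ᵀs‖₂ for all s, and for every κ-sparse s: ((1−δ)/σ_N²)·‖s‖₂² ≤ ‖Q̄s‖₂² ≤ min(1, (1+δ)/σ₁²)·‖s‖₂². -/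
open Matrix BigOperators

lemma aux_iso {m n : ℕ} (A : Matrix (Fin m) (Fin n) ℝ) (h : Aᵀ * A = 1)
    (u : Fin n → ℝ) : ∑ i, (A.mulVec u i) ^ 2 = ∑ j, u j ^ 2 := by
  have : (A.mulVec u) ⬝ᵥ (A.mulVec u) = u ⬝ᵥ u := by
    rw [Matrix.dotProduct_mulVec, ← Matrix.mulVec_transpose, Matrix.mulVec_mulVec, h,
      Matrix.one_mulVec]
  simpa [dotProduct, pow_two] using this

/-- with `Q` satisfying the `(κ,δ)`-RIP and `Q̄ = V₁V₁ᵀ`, one has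
`‖Q̄s‖₂ = ‖V₁ᵀs‖₂` for all `s`, and for every `κ`-sparse `s`,
`((1-δ)/σ_N²)‖s‖₂² ≤ ‖Q̄s‖₂² ≤ min(1, (1+δ)/σ₁²)‖s‖₂²`. -/
theorem rip_transfer_to_projection {N L κ : ℕ}
    (U : Matrix (Fin N) (Fin N) ℝ) (hU : U * Uᵀ = 1 ∧ Uᵀ * U = 1)
    (V₁ : Matrix (Fin L) (Fin N) ℝ) (hV₁ : V₁ᵀ * V₁ = 1)
    (d : Fin N → ℝ) (σ₁ σN : ℝ) (hσ₁ : 0 < σ₁) (hσ : σ₁ ≤ σN)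
    (hbound : ∀ i, σ₁ ≤ d i ∧ d i ≤ σN)
    (Q : Matrix (Fin N) (Fin L) ℝ) (hQ : Q = U * Matrix.diagonal d * V₁ᵀ)
    (δ : ℝ)
    (hRIP : ∀ s : Fin L → ℝ, (Finset.univ.filter fun i => s i ≠ 0).card ≤ κ →
      (1 - δ) * ∑ i, (s i) ^ 2 ≤ ∑ n, (Q.mulVec s n) ^ 2 ∧
      ∑ n, (Q.mulVec s n) ^ 2 ≤ (1 + δ) * ∑ i, (s i) ^ 2) :
    (∀ s : Fin L → ℝ,
      Real.sqrt (∑ l, ((V₁ * V₁ᵀ).mulVec s l) ^ 2) =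
        Real.sqrt (∑ j, (V₁ᵀ.mulVec s j) ^ 2)) ∧
    (∀ s : Fin L → ℝ, (Finset.univ.filter fun i => s i ≠ 0).card ≤ κ →
      ((1 - δ) / σN ^ 2) * ∑ i, (s i) ^ 2 ≤ ∑ l, ((V₁ * V₁ᵀ).mulVec s l) ^ 2 ∧
      ∑ l, ((V₁ * V₁ᵀ).mulVec s l) ^ 2 ≤ min 1 ((1 + δ) / σ₁ ^ 2) * ∑ i, (s i) ^ 2) := by
  have hσN : 0 < σN := lt_of_lt_of_le hσ₁ hσ
  -- ‖Q̄ s‖² = ‖V₁ᵀ s‖²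
  have hP : ∀ s : Fin L → ℝ,
      ∑ l, ((V₁ * V₁ᵀ).mulVec s l) ^ 2 = ∑ j, (V₁ᵀ.mulVec s j) ^ 2 := by
    intro s
    rw [← Matrix.mulVec_mulVec]
    exact aux_iso V₁ hV₁ _
  refine ⟨fun s => by rw [hP s], fun s hs => ?_⟩
  set y : Fin N → ℝ := V₁ᵀ.mulVec s with hy
  have hyn : ∀ j, 0 ≤ y j ^ 2 := fun j => sq_nonneg _
  -- ‖Q s‖² = ∑ d i² y i²
  have hQs : ∑ n, (Q.mulVec s n) ^ 2 = ∑ i, (d i) ^ 2 * (y i) ^ 2 := by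
    have : Q.mulVec s = U.mulVec ((Matrix.diagonal d).mulVec y) := by
      rw [hQ, Matrix.mulVec_mulVec, Matrix.mulVec_mulVec]
    rw [this, aux_iso U hU.2]
    simp [Matrix.mulVec_diagonal, mul_pow]
  obtain ⟨h1, h2⟩ := hRIP s hs
  rw [hQs] at h1 h2
  have hd2 : ∀ i, σ₁ ^ 2 ≤ (d i) ^ 2 ∧ (d i) ^ 2 ≤ σN ^ 2 := by
    intro i
    obtain ⟨ha, hb⟩ := hbound i
    constructor
    · exact pow_le_pow_left₀ hσ₁.le ha 2
    · exact pow_le_pow_left₀ (le_trans hσ₁.le ha) hb 2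
  have hupN : ∑ i, (d i) ^ 2 * (y i) ^ 2 ≤ σN ^ 2 * ∑ i, (y i) ^ 2 := by
    rw [Finset.mul_sum]
    exact Finset.sum_le_sum fun i _ => mul_le_mul_of_nonneg_right (hd2 i).2 (hyn i)
  have hlo1 : σ₁ ^ 2 * ∑ i, (y i) ^ 2 ≤ ∑ i, (d i) ^ 2 * (y i) ^ 2 := by
    rw [Finset.mul_sum]
    exact Finset.sum_le_sum fun i _ => mul_le_mul_of_nonneg_right (hd2 i).1 (hyn i)
  rw [hP s]
  constructor
  · -- lower bound
    rw [div_mul_eq_mul_div, div_le_iff₀ (by positivity : (0:ℝ) < σN ^ 2)]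
    calc (1 - δ) * ∑ i, s i ^ 2 ≤ ∑ i, (d i) ^ 2 * (y i) ^ 2 := h1
      _ ≤ σN ^ 2 * ∑ i, (y i) ^ 2 := hupN
      _ = (∑ j, y j ^ 2) * σN ^ 2 := by ring
  · -- upper bound
    have hub1 : ∑ j, y j ^ 2 ≤ (1 + δ) / σ₁ ^ 2 * ∑ i, s i ^ 2 := by
      rw [div_mul_eq_mul_div, le_div_iff₀ (by positivity : (0:ℝ) < σ₁ ^ 2)]
      calc (∑ j, y j ^ 2) * σ₁ ^ 2 = σ₁ ^ 2 * ∑ j, y j ^ 2 := by ring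
        _ ≤ ∑ i, (d i) ^ 2 * (y i) ^ 2 := hlo1
        _ ≤ (1 + δ) * ∑ i, s i ^ 2 := h2
    have hub2 : ∑ j, y j ^ 2 ≤ ∑ i, s i ^ 2 := by
      -- Cauchy–Schwarz: (∑ y²)² = (⟨Ps, s⟩)² ≤ ‖Ps‖²‖s‖² = (∑ y²)(∑ s²)
      have hdot : ∑ j, y j ^ 2 = ∑ i, ((V₁ * V₁ᵀ).mulVec s i) * s i := by
        have : y ⬝ᵥ y = ((V₁ * V₁ᵀ).mulVec s) ⬝ᵥ s := by
          conv_lhs => rw [hy, Matrix.dotProduct_mulVec, ← Matrix.mulVec_transpose,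
            Matrix.transpose_transpose, Matrix.mulVec_mulVec]
        simpa [dotProduct, pow_two] using this
      have hcs := Finset.sum_mul_sq_le_sq_mul_sq Finset.univ
        (fun i => (V₁ * V₁ᵀ).mulVec s i) s
      rw [← hdot, hP s] at hcs
      rcases eq_or_lt_of_le (Finset.sum_nonneg fun j _ => hyn j :
          (0:ℝ) ≤ ∑ j, y j ^ 2) with h0 | h0
      · rw [← h0]; positivity
      · exact le_of_mul_le_mul_left (by
          calc (∑ j, y j ^ 2) * (∑ j, y j ^ 2) = (∑ j, y j ^ 2) ^ 2 := (sq _).symm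
            _ ≤ (∑ j, y j ^ 2) * ∑ i, s i ^ 2 := hcs) h0
    calc ∑ j, y j ^ 2 ≤ min (∑ i, s i ^ 2) ((1 + δ) / σ₁ ^ 2 * ∑ i, s i ^ 2) :=
          le_min hub2 hub1
      _ = min 1 ((1 + δ) / σ₁ ^ 2) * ∑ i, s i ^ 2 := by
          rw [min_mul_of_nonneg _ _ (by positivity : (0:ℝ) ≤ ∑ i, s i ^ 2), one_mul]
end
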